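/- Let n ≥ 4, t ∈ {n−1, n}, and let λ = (λ_1 > ⋯ > λ_ℓ > 0) be a strict partition with λ_1 ≤ n−1, with residues on its shifted diagram given by the type D_n spin convention. Decompose λ into consecutive groups of two rows: R_k consists of rows 2k−1 and 2k (or only row 2k−1 if ℓ = 2k−1 is the last row). Then the weight wt(R_k) := Σ_{(i,j)∈R_k} α_{res(i,j)} equals e_{n−λ_{2k−1}} + e_{n−λ_{2k}} when R_k consists of two rows, and equals e_{n−λ_{2k−1}} + e_n if t = n, respectively e_{n−λ_{2k−1}} − e_n if t = n−1, when R_k consists of a single row. In particular, each wt(R_k) is a positive root of type D_n. -/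

import Mathlib

/-!
Along row `i` the residues `n-2, n-3, …, n-λ_i` of the off-diagonal boxes give simple roots
`e_j - e_{j+1}` that telescope to `e_{n-λ_i} - e_{n-1}`, so the row has weight
`α_res(i,i) + e_{n-λ_i} - e_{n-1}`. The diagonal residues of two consecutive rows are `n` and
`n-1` in some order, and `α_n + α_{n-1} = 2 e_{n-1}` cancels both `-e_{n-1}`; a lone row keeps
`α_t - e_{n-1}`, which is `e_n` or `-e_n`.
-/

namespace Stmt11

/-- Standard basis vector `e_k` (1-indexed) of `ℚ^n`. -/
def E (n k : ℕ) : Fin n → ℚ := fun x => if (x : ℕ) + 1 = k then 1 else 0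

/-- Type `D_n` simple roots: `α_k = e_k - e_{k+1}` for `1 ≤ k ≤ n-1`
and `α_n = e_{n-1} + e_n`. -/
def alpha (n k : ℕ) : Fin n → ℚ :=
  if k = n then E n (n - 1) + E n n else E n k - E n (k + 1)

/-- The weight of row `i` of the shifted Young diagram of the strict partition `l`
(with `l i ≥ 1`), under the type `D_n` spin residue convention: the diagonal box
`(i,i)` has residue `t` if `i` is odd and `t'` if `i` is even, and the box `(i, i+k)`
(`1 ≤ k ≤ λ_i - 1`) has residue `n + i - (i+k) - 1 = n - 1 - k`. -/
def rowWt (n t t' : ℕ) (l : ℕ → ℕ) (i : ℕ) : Fin n → ℚ :=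
  alpha n (if i % 2 = 1 then t else t') +
    ∑ k ∈ Finset.Icc 1 (l i - 1), alpha n (n - 1 - k)

section Roots

variable {n : ℕ}

lemma alpha_of_ne {k : ℕ} (hk : k ≠ n) : alpha n k = E n k - E n (k + 1) := if_neg hk

lemma alpha_self_sub_E_pred : alpha n n - E n (n - 1) = E n n := by
  rw [alpha, if_pos rfl]
  abel

lemma alpha_pred_sub_E_pred (hn : 1 ≤ n) : alpha n (n - 1) - E n (n - 1) = -E n n := by
  rw [alpha_of_ne (by omega), Nat.sub_add_cancel hn]
  abel

lemma alpha_self_add_alpha_pred (hn : 1 ≤ n) :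
    alpha n n + alpha n (n - 1) = E n (n - 1) + E n (n - 1) := by
  rw [alpha, if_pos rfl, alpha_of_ne (by omega), Nat.sub_add_cancel hn]
  abel

lemma sum_alpha_arm {m : ℕ} (hm : 1 ≤ m) (hmn : m ≤ n - 1) :
    ∑ k ∈ Finset.Icc 1 (m - 1), alpha n (n - 1 - k) = E n (n - m) - E n (n - 1) := by
  induction m, hm using Nat.le_induction with
  | base => simp
  | succ m hm ih =>
    have hIcc : Finset.Icc 1 (m + 1 - 1) = insert m (Finset.Icc 1 (m - 1)) := by
      ext x
      simp only [Finset.mem_Icc, Finset.mem_insert]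
      omega
    rw [hIcc, Finset.sum_insert (by simp only [Finset.mem_Icc]; omega), ih (by omega),
      alpha_of_ne (by omega), show n - 1 - m + 1 = n - m by omega,
      show n - (m + 1) = n - 1 - m by omega]
    abel

end Roots

lemma rowWt_eq {n t t' : ℕ} {l : ℕ → ℕ} {i : ℕ} (h1 : 1 ≤ l i) (h2 : l i ≤ n - 1) :
    rowWt n t t' l i = alpha n (if i % 2 = 1 then t else t') + E n (n - l i) - E n (n - 1) := by
  rw [rowWt, sum_alpha_arm h1 h2]
  abel

lemma le_first_of_strict {l : ℕ → ℕ} (hstrict : ∀ i j, 1 ≤ i → i < j → 0 < l j → l j < l i)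
    {i : ℕ} (hi : 1 ≤ i) (hpos : 0 < l i) : l i ≤ l 1 := by
  rcases hi.eq_or_lt with rfl | hi
  · exact le_rfl
  · exact (hstrict 1 i le_rfl hi hpos).le

theorem stmt11 (n t t' : ℕ)
    (htt' : (t = n ∧ t' = n - 1) ∨ (t = n - 1 ∧ t' = n))
    (l : ℕ → ℕ)
    (hstrict : ∀ i j, 1 ≤ i → i < j → 0 < l j → l j < l i)
    (hbd : l 1 ≤ n - 1)
    (k : ℕ) (hk : 1 ≤ k) (hpos : 0 < l (2 * k - 1)) :
    (0 < l (2 * k) →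
      rowWt n t t' l (2 * k - 1) + rowWt n t t' l (2 * k)
          = E n (n - l (2 * k - 1)) + E n (n - l (2 * k)) ∧
      ∃ a b, 1 ≤ a ∧ a < b ∧ b ≤ n ∧
        rowWt n t t' l (2 * k - 1) + rowWt n t t' l (2 * k) = E n a + E n b) ∧
    (l (2 * k) = 0 →
      (t = n → rowWt n t t' l (2 * k - 1) = E n (n - l (2 * k - 1)) + E n n) ∧
      (t = n - 1 → rowWt n t t' l (2 * k - 1) = E n (n - l (2 * k - 1)) - E n n) ∧
      ∃ a b, 1 ≤ a ∧ a < b ∧ b ≤ n ∧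
        (rowWt n t t' l (2 * k - 1) = E n a + E n b ∨
          rowWt n t t' l (2 * k - 1) = E n a - E n b)) := by
  have hlen : l (2 * k - 1) ≤ n - 1 := (le_first_of_strict hstrict (by omega) hpos).trans hbd
  have hodd : rowWt n t t' l (2 * k - 1) = alpha n t + E n (n - l (2 * k - 1)) - E n (n - 1) := by
    rw [rowWt_eq hpos hlen, if_pos (by omega)]
  refine ⟨fun hpos' => ?pair, fun _ => ?single⟩
  case pair =>
    have hlt := hstrict (2 * k - 1) (2 * k) (by omega) (by omega) hpos'
    have heven : rowWt n t t' l (2 * k) = alpha n t' + E n (n - l (2 * k)) - E n (n - 1) := by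
      rw [rowWt_eq hpos' (by omega), if_neg (by omega)]
    have hdiag : alpha n t + alpha n t' = E n (n - 1) + E n (n - 1) := by
      rcases htt' with ⟨rfl, rfl⟩ | ⟨rfl, rfl⟩
      · exact alpha_self_add_alpha_pred (by omega)
      · rw [add_comm]; exact alpha_self_add_alpha_pred (by omega)
    have hsum : rowWt n t t' l (2 * k - 1) + rowWt n t t' l (2 * k)
        = E n (n - l (2 * k - 1)) + E n (n - l (2 * k)) := by
      rw [hodd, heven]
      linear_combination hdiag
    exact ⟨hsum, _, _, by omega, by omega, by omega, hsum⟩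
  case single =>
    rcases htt' with ⟨ht, -⟩ | ⟨ht, -⟩
    · have hrow : rowWt n t t' l (2 * k - 1) = E n (n - l (2 * k - 1)) + E n n := by
        rw [hodd, ht]
        linear_combination alpha_self_sub_E_pred (n := n)
      exact ⟨fun _ => hrow, fun h => by omega, _, _, by omega, by omega, le_rfl, .inl hrow⟩
    · have hrow : rowWt n t t' l (2 * k - 1) = E n (n - l (2 * k - 1)) - E n n := by
        rw [hodd, ht]
        linear_combination alpha_pred_sub_E_pred (n := n) (by omega)
      exact ⟨fun h => by omega, fun _ => hrow, _, _, by omega, by omega, le_rfl, .inr hrow⟩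

end Stmt11
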